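/- arXiv:1401.8260 — 6 statements merged into one kernel-verified Lean document; each statement's English description precedes it below -/
import Mathlib

section
/- The determinant of the adjacency matrix of the Paley graph P(q) equals k·(k/2)^k, where k=(q-1)/2; in particular det(A) is coprime to q. -/
/-!
Write `χ` for the quadratic character of `F`, `J` for the all-ones matrix and `q = 4μ + 1`.
The Jacobsthal matrix `Q = (χ (x - y))` satisfies `QJ = JQ = 0` and `Q² = qI - J`, the latter
by a Jacobi sum computation, and `2A = Q + J - I`. Hence `A² + A = μ(I + J)` and `AJ = 2μJ`:
every eigenvalue of `A` is `2μ` or a root of `t² + t - μ`. The trace of `A² + A - μI = μJ`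
shows that `2μ` is a simple eigenvalue, and `tr A = 0` forces both roots `(-1 ± √q)/2` to occur
`2μ` times each. So `det A = 2μ (-μ)^(2μ) = k (k/2)^k`, a product of divisors of `q - 1`.
-/

open Finset Matrix Polynomial Unitary

instance {m n α : Type*} [AddMonoid α] [IsAddTorsionFree α] : IsAddTorsionFree (Matrix m n α) :=
  inferInstanceAs (IsAddTorsionFree (m → n → α))

theorem Matrix.of_one_mul_of_one {n α : Type*} [Fintype n] [NonAssocSemiring α] :
    (of 1 : Matrix n n α) * of 1 = Fintype.card n • of 1 := by
  ext; simp [mul_apply]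

theorem prod_eq_neg_pow_of_sq_add_self_eq {ι : Type*} {s : Finset ι} {e : ι → ℝ} {c : ℝ}
    {m : ℕ} (hc : 0 < 4 * c + 1) (he : ∀ i ∈ s, e i ^ 2 + e i = c) (hs : #s = 2 * m)
    (hsum : ∑ i ∈ s, e i = -m) : ∏ i ∈ s, e i = (-c) ^ m := by
  classical
  set t := √(4 * c + 1)
  have ht : t * t = 4 * c + 1 := Real.mul_self_sqrt hc.le
  have ht0 : t ≠ 0 := (Real.sqrt_pos.mpr hc).ne'
  set r := (-1 + t) / 2
  have hother (i : ι) (hi : i ∈ s) (hne : e i ≠ r) : e i = -1 - r := by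
    have : (e i - r) * (e i - (-1 - r)) = 0 := by linear_combination he i hi - ht / 4
    exact sub_eq_zero.mp ((mul_eq_zero.mp this).resolve_left (sub_ne_zero.mpr hne))
  set T := s.filter (e · = r)
  set T' := s.filter (e · ≠ r)
  have hT : (#T + #T' : ℝ) = 2 * m := by
    exact_mod_cast (card_filter_add_card_filter_not _).trans hs
  have hprod : ∏ i ∈ s, e i = r ^ #T * (-1 - r) ^ #T' := by
    rw [← prod_filter_mul_prod_filter_not s (e · = r),
      prod_congr rfl fun i hi => (mem_filter.mp hi).2,
      prod_congr rfl fun i hi => hother i (mem_filter.mp hi).1 (mem_filter.mp hi).2,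
      prod_const, prod_const]
  have hsum' : ∑ i ∈ s, e i = #T * r + #T' * (-1 - r) := by
    rw [← sum_filter_add_sum_filter_not s (e · = r),
      sum_congr rfl fun i hi => (mem_filter.mp hi).2,
      sum_congr rfl fun i hi => hother i (mem_filter.mp hi).1 (mem_filter.mp hi).2,
      sum_const, sum_const, nsmul_eq_mul, nsmul_eq_mul]
  have hTm : #T = m ∧ #T' = m := by
    have : ((#T : ℝ) - m) * t = 0 := by
      linear_combination hsum'.symm.trans hsum + (1 + t) / 2 * hT
    have hTm : (#T : ℝ) = m := sub_eq_zero.mp ((mul_eq_zero.mp this).resolve_right ht0)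
    have hT'm : (#T' : ℝ) = m := by linear_combination hT - hTm
    exact ⟨by exact_mod_cast hTm, by exact_mod_cast hT'm⟩
  rw [hprod, hTm.1, hTm.2, ← mul_pow]
  congr 1
  linear_combination -ht / 4

theorem Matrix.aeval_X_sq_add_X_sub_C_of_mul_self_add_self_eq {n R : Type*} [Fintype n]
    [DecidableEq n] [CommRing R] {B : Matrix n n R} {μ : ℕ}
    (hsq : B * B + B = μ • (1 + of 1)) :
    aeval B (X ^ 2 + X - C (μ : R)) = μ • of 1 := by
  simp [sq, hsq]

namespace Matrix.IsHermitian

variable {n : Type*} [Fintype n] [DecidableEq n] {B : Matrix n n ℝ} (hB : B.IsHermitian)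
include hB

theorem aeval_eq_conjStarAlgAut_diagonal (p : ℝ[X]) :
    aeval B p = conjStarAlgAut ℝ _ hB.eigenvectorUnitary
      (diagonal fun i => p.eval (hB.eigenvalues i)) := by
  conv_lhs => rw [hB.spectral_theorem]
  rw [aeval_algHom_apply, ← diagonalAlgHom_apply ℝ, aeval_algHom_apply, aeval_pi_apply]
  simp

theorem eval_eigenvalues_eq_zero {p : ℝ[X]} (hp : aeval B p = 0) (i : n) :
    p.eval (hB.eigenvalues i) = 0 := by
  rw [hB.aeval_eq_conjStarAlgAut_diagonal, map_eq_zero_iff _ (EquivLike.injective _)] at hp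
  simpa using congr_fun₂ hp i i

theorem trace_aeval (p : ℝ[X]) : (aeval B p).trace = ∑ i, p.eval (hB.eigenvalues i) := by
  rw [hB.aeval_eq_conjStarAlgAut_diagonal, conjStarAlgAut_apply, trace_mul_cycle,
    coe_star_mul_self, one_mul, trace_diagonal]

section
variable {μ : ℕ} (hsq : B * B + B = μ • (1 + of 1))
include hsq

theorem eigenvalues_eq_or_of_mul_self_add_self_eq (hJ : B * of 1 = (2 * μ) • of 1) (i : n) :
    hB.eigenvalues i = 2 * μ ∨ hB.eigenvalues i ^ 2 + hB.eigenvalues i = μ := by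
  have := hB.eval_eigenvalues_eq_zero (p := (X - C (2 * μ : ℝ)) * (X ^ 2 + X - C (μ : ℝ))) (by
    rw [map_mul, aeval_X_sq_add_X_sub_C_of_mul_self_add_self_eq hsq, map_sub, aeval_X, aeval_C,
      Algebra.algebraMap_eq_smul_one, mul_smul_comm, sub_mul, hJ, smul_mul_assoc, one_mul]
    module) i
  simpa [sub_eq_zero] using this

theorem card_eigenvalues_eq_of_mul_self_add_self_eq (hμ : 0 < μ)
    (hn : Fintype.card n = 4 * μ + 1) (hJ : B * of 1 = (2 * μ) • of 1) :
    #{i | hB.eigenvalues i = 2 * μ} = 1 := by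
  have hroot := hB.eigenvalues_eq_or_of_mul_self_add_self_eq hsq hJ
  set d := hB.eigenvalues
  have hsum₂ : ∑ i, (d i ^ 2 + d i - μ) = μ * (4 * μ + 1) := by
    have := hB.trace_aeval (X ^ 2 + X - C (μ : ℝ))
    rw [aeval_X_sq_add_X_sub_C_of_mul_self_add_self_eq hsq, trace_smul] at this
    simp only [trace, diag_apply, of_apply, Pi.one_apply, nsmul_eq_mul, mul_one,
      sum_const, card_univ, hn, eval_sub, eval_add, eval_pow, eval_X, eval_C] at this
    push_cast at this
    linear_combination -this
  have hterm (i : n) :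
      d i ^ 2 + d i - μ = if d i = 2 * μ then (μ * (4 * μ + 1) : ℝ) else 0 := by
    split_ifs with h
    · rw [h]; ring
    · linear_combination (hroot i).resolve_left h
  rw [sum_congr rfl fun i _ => hterm i, sum_ite, sum_const_zero, add_zero, sum_const,
    nsmul_eq_mul] at hsum₂
  have : (#{i | d i = 2 * μ} : ℝ) = 1 :=
    mul_right_cancel₀ (by positivity) (hsum₂.trans (one_mul _).symm)
  exact_mod_cast this

theorem det_eq_of_mul_self_add_self_eq (hμ : 0 < μ) (hn : Fintype.card n = 4 * μ + 1)
    (hJ : B * of 1 = (2 * μ) • of 1) (htr : B.trace = 0) :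
    B.det = 2 * μ * μ ^ (2 * μ) := by
  have hroot := hB.eigenvalues_eq_or_of_mul_self_add_self_eq hsq hJ
  have hk := hB.card_eigenvalues_eq_of_mul_self_add_self_eq hsq hμ hn hJ
  set d := hB.eigenvalues
  have hsum : ∑ i, d i = 0 := by
    have := hB.trace_aeval X
    rw [aeval_X, htr] at this
    simpa using this.symm
  have hk' : #{i | d i ≠ 2 * μ} = 2 * (2 * μ) := by
    have := card_filter_add_card_filter_not (s := univ) (d · = 2 * μ)
    rw [hk, card_univ, hn] at this
    simp only [ne_eq]
    omega
  have hsum' : ∑ i with d i ≠ 2 * μ, d i = -(2 * μ : ℕ) := by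
    rw [← sum_filter_add_sum_filter_not univ (d · = 2 * μ),
      sum_congr rfl fun i hi => (mem_filter.mp hi).2, sum_const, hk] at hsum
    push_cast
    linear_combination hsum
  have hprod := prod_eq_neg_pow_of_sq_add_self_eq (by positivity)
    (fun i hi => (hroot i).resolve_left (mem_filter.mp hi).2) hk' hsum'
  calc B.det = ∏ i, d i := by simp [hB.det_eq_prod_eigenvalues, d]
    _ = (∏ i with d i = 2 * μ, d i) * ∏ i with d i ≠ 2 * μ, d i :=
      (prod_filter_mul_prod_filter_not _ _ _).symm
    _ = 2 * μ * (-μ) ^ (2 * μ) := by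
      rw [prod_congr rfl fun i hi => (mem_filter.mp hi).2, prod_const, hk, pow_one, hprod]
    _ = 2 * μ * μ ^ (2 * μ) := by rw [(even_two_mul μ).neg_pow]

end

end Matrix.IsHermitian

section FiniteField

variable {F : Type*} [Field F] [Fintype F]

theorem ringChar_ne_two_of_card_eq {μ : ℕ} (hcard : Fintype.card F = 4 * μ + 1) :
    ringChar F ≠ 2 := by
  intro h
  have := FiniteField.even_card_of_char_two h
  omega

theorem isSquare_neg_one_of_card_eq {μ : ℕ} (hcard : Fintype.card F = 4 * μ + 1) :
    IsSquare (-1 : F) := by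
  rw [FiniteField.isSquare_neg_one_iff]; omega

variable [DecidableEq F]

theorem quadraticChar_sum_mul_add (hF : ringChar F ≠ 2) {c : F} (hc : c ≠ 0) :
    ∑ t : F, quadraticChar F t * quadraticChar F (t + c) = -1 := by
  set χ := quadraticChar F
  have hc2 : χ c ^ 2 = 1 := quadraticChar_sq_one hc
  have hm2 : χ (-1) ^ 2 = 1 := quadraticChar_sq_one (neg_ne_zero.mpr one_ne_zero)
  calc ∑ t, χ t * χ (t + c) = ∑ x, χ (-c * x) * χ (-c * x + c) :=
        (Equiv.sum_comp (Equiv.mulLeft₀ (-c) (neg_ne_zero.mpr hc)) _).symm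
    _ = ∑ x, χ (-1) * χ c ^ 2 * (χ x * χ⁻¹ (1 - x)) := by
        refine sum_congr rfl fun x _ => ?_
        rw [(quadraticChar_isQuadratic F).inv, show -c * x + c = c * (1 - x) by ring,
          show -c * x = -1 * c * x by ring]
        simp only [map_mul]
        ring
    _ = -1 := by
        rw [← mul_sum, ← jacobiSum, jacobiSum_nontrivial_inv (quadraticChar_ne_one hF), hc2]
        linear_combination -hm2

theorem quadraticChar_sum_sq : ∑ t : F, quadraticChar F t ^ 2 = Fintype.card F - 1 := by
  rw [← sum_erase_add _ _ (mem_univ 0), sum_congr rfl fun t ht =>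
    quadraticChar_sq_one (ne_of_mem_erase ht)]
  simp [card_erase_of_mem, Nat.cast_sub Fintype.card_pos]

variable (F) in
def jacobsthalMatrix : Matrix F F ℤ := of fun x y => quadraticChar F (x - y)

theorem jacobsthalMatrix_mul_of_one (hF : ringChar F ≠ 2) : jacobsthalMatrix F * of 1 = 0 := by
  ext x
  simp only [jacobsthalMatrix, mul_apply, of_apply, Pi.one_apply, mul_one, Matrix.zero_apply]
  exact ((Equiv.subLeft x).sum_comp (quadraticChar F ·)).trans (quadraticChar_sum_zero hF)

theorem of_one_mul_jacobsthalMatrix (hF : ringChar F ≠ 2) : of 1 * jacobsthalMatrix F = 0 := by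
  ext x z
  simp only [jacobsthalMatrix, mul_apply, of_apply, Pi.one_apply, one_mul, Matrix.zero_apply]
  exact ((Equiv.subRight z).sum_comp (quadraticChar F ·)).trans (quadraticChar_sum_zero hF)

theorem jacobsthalMatrix_mul_transpose (hF : ringChar F ≠ 2) :
    jacobsthalMatrix F * (jacobsthalMatrix F)ᵀ = Fintype.card F • 1 - of 1 := by
  ext x z
  simp only [jacobsthalMatrix, mul_apply, transpose_apply, of_apply, Matrix.sub_apply,
    Matrix.smul_apply, one_apply, Pi.one_apply]
  rw [← (Equiv.subLeft x).sum_comp]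
  simp only [Equiv.subLeft_apply, sub_sub_cancel, show ∀ y, z - (x - y) = y + (z - x) by
    intro y; ring]
  by_cases hxz : x = z
  · subst hxz
    simp only [sub_self, add_zero, ← sq, quadraticChar_sum_sq]
    simp
  · rw [quadraticChar_sum_mul_add hF (sub_ne_zero.mpr (Ne.symm hxz))]
    simp [hxz]

theorem jacobsthalMatrix_transpose (h : IsSquare (-1 : F)) :
    (jacobsthalMatrix F)ᵀ = jacobsthalMatrix F := by
  have h1 : quadraticChar F (-1) = 1 :=
    (quadraticChar_one_iff_isSquare (neg_ne_zero.mpr one_ne_zero)).mpr h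
  ext x y
  simp only [jacobsthalMatrix, transpose_apply, of_apply]
  rw [← neg_sub, neg_eq_neg_one_mul, map_mul, h1, one_mul]

variable (F) in
def paleyMatrix [DecidablePred (IsSquare : F → Prop)] : Matrix F F ℤ :=
  of fun x y => if x ≠ y ∧ IsSquare (x - y) then 1 else 0

variable [DecidablePred (IsSquare : F → Prop)]

theorem two_nsmul_paleyMatrix : 2 • paleyMatrix F = jacobsthalMatrix F + of 1 - 1 := by
  ext x y
  by_cases hxy : x = y
  · simp [paleyMatrix, jacobsthalMatrix, hxy]
  · have hne : x - y ≠ 0 := sub_ne_zero.mpr hxy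
    by_cases hsq : IsSquare (x - y)
    · have := (quadraticChar_one_iff_isSquare hne).mpr hsq
      simp_all [paleyMatrix, jacobsthalMatrix]
    · have := quadraticChar_neg_one_iff_not_isSquare.mpr hsq
      simp_all [paleyMatrix, jacobsthalMatrix]

section
variable {μ : ℕ} (hcard : Fintype.card F = 4 * μ + 1)
include hcard

theorem paleyMatrix_mul_of_one : paleyMatrix F * of 1 = (2 * μ) • of 1 := by
  have hF := ringChar_ne_two_of_card_eq hcard
  refine nsmul_right_injective two_ne_zero ?_
  dsimp only
  rw [← smul_mul_assoc, two_nsmul_paleyMatrix, sub_mul, add_mul, jacobsthalMatrix_mul_of_one hF,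
    of_one_mul_of_one, hcard, one_mul, smul_smul]
  module

theorem paleyMatrix_mul_self_add_self :
    paleyMatrix F * paleyMatrix F + paleyMatrix F = μ • (1 + of 1) := by
  have hF := ringChar_ne_two_of_card_eq hcard
  have hQQ : jacobsthalMatrix F * jacobsthalMatrix F = Fintype.card F • 1 - of 1 := by
    nth_rw 2 [← jacobsthalMatrix_transpose (isSquare_neg_one_of_card_eq hcard)]
    exact jacobsthalMatrix_mul_transpose hF
  refine nsmul_right_injective four_ne_zero ?_
  calc 4 • (paleyMatrix F * paleyMatrix F + paleyMatrix F)
      = (2 • paleyMatrix F) * (2 • paleyMatrix F) + 2 • (2 • paleyMatrix F) := by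
        rw [smul_mul_smul_comm, smul_smul, ← smul_add]
    _ = jacobsthalMatrix F * jacobsthalMatrix F + jacobsthalMatrix F * of 1
          + of 1 * jacobsthalMatrix F + of 1 * of 1 - 1 := by
        rw [two_nsmul_paleyMatrix]; noncomm_ring
    _ = 4 • (μ • (1 + of 1)) := by
      rw [hQQ, jacobsthalMatrix_mul_of_one hF, of_one_mul_jacobsthalMatrix hF, of_one_mul_of_one,
        hcard]
      module

theorem paleyMatrix_transpose : (paleyMatrix F)ᵀ = paleyMatrix F := by
  refine nsmul_right_injective two_ne_zero ?_
  dsimp only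
  rw [← transpose_smul, two_nsmul_paleyMatrix, transpose_sub, transpose_add, transpose_one,
    jacobsthalMatrix_transpose (isSquare_neg_one_of_card_eq hcard)]
  rfl

theorem det_paleyMatrix : (paleyMatrix F).det = 2 * μ * μ ^ (2 * μ) := by
  have hμ : 0 < μ := by have := Fintype.one_lt_card (α := F); omega
  set φ := (Int.castRingHom ℝ).mapMatrix (m := F)
  have hJ : φ (of 1) = of 1 := by ext; simp [φ]
  have hB : (φ (paleyMatrix F)).IsHermitian := by
    rw [isHermitian_iff_isSymm, IsSymm, RingHom.mapMatrix_apply, ← transpose_map,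
      paleyMatrix_transpose hcard]
  have hsq : φ (paleyMatrix F) * φ (paleyMatrix F) + φ (paleyMatrix F) = μ • (1 + of 1) := by
    rw [← map_mul, ← map_add, paleyMatrix_mul_self_add_self hcard, map_nsmul, map_add, map_one,
      hJ]
  have hJ' : φ (paleyMatrix F) * of 1 = (2 * μ) • of 1 := by
    rw [← hJ, ← map_mul, paleyMatrix_mul_of_one hcard, map_nsmul]
  have htr : (φ (paleyMatrix F)).trace = 0 := by
    simp [φ, trace, paleyMatrix]
  have : ((paleyMatrix F).det : ℝ) = 2 * μ * μ ^ (2 * μ) := by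
    rw [← eq_intCast (Int.castRingHom ℝ), RingHom.map_det]
    exact hB.det_eq_of_mul_self_add_self_eq hsq hμ hcard hJ' htr
  exact_mod_cast this

end

end FiniteField

theorem paley_adjacency_det_general
    (q : ℕ) (hq4 : q % 4 = 1)
    (F : Type*) [Field F] [Fintype F] [DecidableEq F]
    [DecidablePred (IsSquare : F → Prop)]
    (hcard : Fintype.card F = q)
    (A : Matrix F F ℤ)
    (hA : ∀ x y : F, A x y = if x ≠ y ∧ IsSquare (x - y) then 1 else 0) :
    A.det = (((q - 1) / 2 : ℕ) : ℤ) * ((((q - 1) / 2) / 2 : ℕ) : ℤ) ^ ((q - 1) / 2) ∧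
      IsCoprime A.det (q : ℤ) := by
  obtain rfl : A = paleyMatrix F := Matrix.ext hA
  obtain ⟨μ, rfl⟩ : ∃ μ, q = 4 * μ + 1 := ⟨q / 4, by omega⟩
  rw [show (4 * μ + 1 - 1) / 2 = 2 * μ by omega, show 2 * μ / 2 = μ by omega,
    det_paleyMatrix hcard]
  refine ⟨by push_cast; ring, ?_⟩
  have hμ : IsCoprime (μ : ℤ) (4 * μ + 1 : ℕ) := ⟨-4, 1, by push_cast; ring⟩
  have h2μ : IsCoprime (2 * μ : ℤ) (4 * μ + 1 : ℕ) := ⟨-2, 1, by push_cast; ring⟩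
  exact h2μ.mul_left hμ.pow_left

/-- The determinant of the adjacency matrix of the Paley graph `P(q)` equals
`k·(k/2)^k` where `k = (q-1)/2`; in particular it is coprime to `q`. -/
theorem paley_adjacency_det
    (q : ℕ) (hq : IsPrimePow q) (hq4 : q % 4 = 1)
    (F : Type*) [Field F] [Fintype F] [DecidableEq F]
    [DecidablePred (IsSquare : F → Prop)]
    (hcard : Fintype.card F = q)
    (A : Matrix F F ℤ)
    (hA : ∀ x y : F, A x y = if x ≠ y ∧ IsSquare (x - y) then 1 else 0) :
    A.det = (((q - 1) / 2 : ℕ) : ℤ) * ((((q - 1) / 2) / 2 : ℕ) : ℤ) ^ ((q - 1) / 2) ∧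
      IsCoprime A.det (q : ℤ) :=
  paley_adjacency_det_general q hq4 F hcard A hA
end

section
/- For 1 ≤ i ≤ q−2 with i ≠ k (where k=(q−1)/2), the Laplacian of the Paley graph satisfies L(e_i) = (1/2)(q·e_i − J(T^{−i}, χ)·e_{i+k}), where e_i = Σ_{x∈F_q^×} T^i(x^{−1})[x] and χ = T^k is the quadratic character. -/
/-- `T^a` extended to all of `F` by the convention that nonprincipal characters
take the value `0` at `0`. -/
noncomputable def TeichPow {F : Type*} [Field F] [DecidableEq F] {R : Type*} [CommRing R]
    (T : Fˣ →* Rˣ) (a : ℤ) (x : F) : R :=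
  if h : x = 0 then 0 else ((T (Units.mk0 x h)) ^ a : Rˣ)

/-- The Jacobi sum `J(T^a, T^b) = ∑_{x ∈ F} T^a(x) T^b(1-x)`. -/
noncomputable def JacobiSumT {F : Type*} [Field F] [Fintype F] [DecidableEq F]
    {R : Type*} [CommRing R] (T : Fˣ →* Rˣ) (a b : ℤ) : R :=
  ∑ x : F, TeichPow T a x * TeichPow T b (1 - x)

/-- The Laplacian of the Paley graph as an operator on `R^{F_q}` (coordinates with
respect to the basis `[x]`, `x ∈ F_q`): `L([x]) = k[x] − ∑_{s ∈ S} [x+s]`. -/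
noncomputable def paleyLap {F : Type*} [Field F] [Fintype F] [DecidableEq F]
    [DecidablePred (IsSquare : F → Prop)] {R : Type*} [CommRing R]
    (f : F → R) (y : F) : R :=
  ((Fintype.card F - 1) / 2 : ℕ) • f y -
    ∑ s ∈ Finset.univ.filter (fun s : F => s ≠ 0 ∧ IsSquare s), f (y - s)


section helpers

variable {F : Type*} [Field F] [DecidableEq F] {R : Type*} [CommRing R] (T : Fˣ →* Rˣ)

lemma tp_zero (a : ℤ) : TeichPow T a 0 = 0 := dif_pos rfl

lemma tp_ne (a : ℤ) {x : F} (hx : x ≠ 0) :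
    TeichPow T a x = ((T (Units.mk0 x hx)) ^ a : Rˣ) := dif_neg hx

lemma tp_mul (a : ℤ) (x y : F) :
    TeichPow T a (x * y) = TeichPow T a x * TeichPow T a y := by
  rcases eq_or_ne x 0 with rfl | hx
  · simp [tp_zero]
  rcases eq_or_ne y 0 with rfl | hy
  · simp [tp_zero]
  have hxy : x * y ≠ 0 := mul_ne_zero hx hy
  rw [tp_ne T a hx, tp_ne T a hy, tp_ne T a hxy, Units.mk0_mul x y hxy, map_mul, mul_zpow,
    Units.val_mul]

lemma tp_add (a b : ℤ) (x : F) :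
    TeichPow T (a + b) x = TeichPow T a x * TeichPow T b x := by
  rcases eq_or_ne x 0 with rfl | hx
  · simp [tp_zero]
  rw [tp_ne T _ hx, tp_ne T _ hx, tp_ne T _ hx, zpow_add, Units.val_mul]

variable [Fintype F]

lemma tp_card_sub_one {x : F} (hx : x ≠ 0) :
    TeichPow T ((Fintype.card F - 1 : ℕ) : ℤ) x = 1 := by
  rw [tp_ne T _ hx, zpow_natCast]
  have h1 : (Units.mk0 x hx) ^ (Fintype.card F - 1) = 1 := by
    rw [← Fintype.card_units]; exact pow_card_eq_one
  rw [← map_pow, h1, map_one, Units.val_one]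

lemma tp_period (a : ℤ) (x : F) :
    TeichPow T (a + ((Fintype.card F - 1 : ℕ) : ℤ)) x = TeichPow T a x := by
  rcases eq_or_ne x 0 with rfl | hx
  · simp [tp_zero]
  rw [tp_add, tp_card_sub_one T hx, mul_one]

lemma tp_sum_zero [IsDomain R] (hT : Function.Injective T) {a : ℤ}
    (ha : ¬ (((Fintype.card F - 1 : ℕ) : ℤ) ∣ a)) :
    ∑ x : F, TeichPow T a x = 0 := by
  obtain ⟨g, hg⟩ := IsCyclic.exists_generator (α := Fˣ)
  have hog : orderOf g = Fintype.card F - 1 := by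
    rw [orderOf_eq_card_of_forall_mem_zpowers hg, Nat.card_eq_fintype_card,
      Fintype.card_units]
  have hoT : orderOf (T g) = Fintype.card F - 1 := by rw [orderOf_injective T hT, hog]
  have hne : (T g) ^ a ≠ 1 := by
    intro h
    apply ha
    have := orderOf_dvd_iff_zpow_eq_one.mpr h
    rwa [hoT] at this
  have hg0 : (g : F) ≠ 0 := g.ne_zero
  set S := ∑ x : F, TeichPow T a x with hS
  have key : TeichPow T a (g : F) * S = S := by
    rw [hS, Finset.mul_sum]
    calc ∑ x : F, TeichPow T a (g : F) * TeichPow T a x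
        = ∑ x : F, TeichPow T a ((g : F) * x) :=
          Finset.sum_congr rfl fun x _ => (tp_mul T a _ x).symm
      _ = ∑ x : F, TeichPow T a x :=
          Fintype.sum_equiv (Equiv.mulLeft₀ (g : F) hg0) _ _ (fun x => rfl)
  have hz : (TeichPow T a (g : F) - 1) * S = 0 := by
    rw [sub_mul, one_mul, key, sub_self]
  rcases mul_eq_zero.mp hz with h | h
  · exfalso
    apply hne
    have h1 : TeichPow T a (g : F) = 1 := sub_eq_zero.mp h
    rw [tp_ne T a hg0] at h1
    have h2 : T (Units.mk0 (g : F) hg0) ^ a = 1 := Units.val_eq_one.mp h1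
    rwa [show Units.mk0 (g : F) hg0 = g from Units.ext rfl] at h2
  · exact h

lemma sum_filter_ne_zero_eq_sub (f : F → R) :
    ∑ s ∈ Finset.univ.filter (fun s : F => s ≠ 0), f s = (∑ s : F, f s) - f 0 := by
  rw [Finset.filter_ne' Finset.univ 0, Finset.sum_erase_eq_sub (Finset.mem_univ 0)]

end helpers
/-- For `1 ≤ i ≤ q−2`, `i ≠ k = (q−1)/2`, the Laplacian of the Paley graph satisfies
`L(e_i) = (1/2)(q·e_i − J(T^{−i}, χ)·e_{i+k})`, where
`e_i = ∑_{x ∈ F^×} T^i(x^{−1})[x]` and `χ = T^k` is the quadratic character. -/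
theorem paley_laplacian_on_isotypic_basis
    (p t q : ℕ) (hp : p.Prime) (ht : 1 ≤ t) (hq : q = p ^ t) (hq4 : q % 4 = 1)
    (F : Type*) [Field F] [Fintype F] [DecidableEq F]
    [DecidablePred (IsSquare : F → Prop)]
    (hcard : Fintype.card F = q)
    (R : Type*) [CommRing R] [IsDomain R] [Invertible (2 : R)]
    (T : Fˣ →* Rˣ) (hT : Function.Injective T)
    (e : ℕ → F → R) (he : ∀ (i : ℕ) (x : F), e i x = TeichPow T (-(i : ℤ)) x)
    (i : ℕ) (hi1 : 1 ≤ i) (hi2 : i ≤ q - 2) (hik : i ≠ (q - 1) / 2) :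
    ∀ y : F, paleyLap (e i) y =
      ⅟(2 : R) * ((q : R) * e i y -
        JacobiSumT T (-(i : ℤ)) (((q - 1) / 2 : ℕ) : ℤ) * e (i + (q - 1) / 2) y) := by
  intro y
  have hq5 : 5 ≤ q := by omega
  set k := (q - 1) / 2 with hk
  have hkk : 2 * k = q - 1 := by omega
  have hchar : ringChar F ≠ 2 := by
    intro h
    have h2 := FiniteField.even_card_of_char_two (F := F) h
    rw [hcard] at h2
    omega
  have hdvd1 : ¬ (((Fintype.card F - 1 : ℕ) : ℤ) ∣ (-(i : ℤ))) := by
    rw [hcard]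
    intro h
    have h1 : ((q - 1 : ℕ) : ℤ) ≤ |(-(i : ℤ))| :=
      Int.le_of_dvd (abs_pos.mpr (by omega)) ((dvd_abs _ _).mpr h)
    rw [abs_neg, Int.abs_natCast] at h1
    omega
  have hdvd2 : ¬ (((Fintype.card F - 1 : ℕ) : ℤ) ∣ ((k : ℤ) - i)) := by
    rw [hcard]
    intro h
    have hne : (k : ℤ) - i ≠ 0 := by omega
    have h1 : ((q - 1 : ℕ) : ℤ) ≤ |(k : ℤ) - i| :=
      Int.le_of_dvd (abs_pos.mpr hne) ((dvd_abs _ _).mpr h)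
    rcases abs_cases ((k : ℤ) - i) with ⟨h2, _⟩ | ⟨h2, _⟩ <;> omega
  have hkcard : (k : ℤ) + (k : ℤ) = ((Fintype.card F - 1 : ℕ) : ℤ) := by
    rw [hcard]; omega
  have hsq : ∀ s : F, s ≠ 0 → IsSquare s → TeichPow T (k : ℤ) s = 1 := by
    rintro s hs ⟨c, rfl⟩
    have hc : c ≠ 0 := by rintro rfl; exact hs (mul_zero 0)
    rw [tp_mul, ← tp_add, hkcard, tp_card_sub_one T hc]
  have hnsq : ∀ s : F, s ≠ 0 → ¬ IsSquare s → TeichPow T (k : ℤ) s = -1 := by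
    intro s hs hns
    have h2 : TeichPow T (k : ℤ) s * TeichPow T (k : ℤ) s = 1 := by
      rw [← tp_add, hkcard, tp_card_sub_one T hs]
    rcases mul_self_eq_one_iff.mp h2 with h1 | h1
    · exfalso
      apply hns
      rw [FiniteField.isSquare_iff hchar hs]
      have hcd : Fintype.card F / 2 = k := by rw [hcard]; omega
      rw [hcd]
      rw [tp_ne T _ hs, zpow_natCast] at h1
      have h3 : T (Units.mk0 s hs) ^ k = 1 := Units.val_eq_one.mp h1
      rw [← map_pow] at h3
      have h4 : (Units.mk0 s hs) ^ k = 1 := hT (by rw [h3, map_one])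
      calc s ^ k = (((Units.mk0 s hs) ^ k : Fˣ) : F) := by rw [Units.val_pow_eq_pow_val]; rfl
        _ = 1 := by rw [h4]; rfl
    · exact h1
  have hneg1 : TeichPow T (k : ℤ) (-1 : F) = 1 :=
    hsq _ (neg_ne_zero.mpr one_ne_zero)
      (FiniteField.isSquare_neg_one_iff.mpr (by rw [hcard]; omega))
  set J := JacobiSumT T (-(i : ℤ)) (k : ℤ) with hJ
  have hvan1 : ∑ x : F, TeichPow T (-(i : ℤ)) x = 0 := tp_sum_zero T hT hdvd1
  have hvan2 : ∑ x : F, TeichPow T ((k : ℤ) - i) x = 0 := tp_sum_zero T hT hdvd2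
  have hS1 : ∑ s ∈ Finset.univ.filter (fun s : F => s ≠ 0), TeichPow T (-(i : ℤ)) (y - s)
      = -(TeichPow T (-(i : ℤ)) y) := by
    rw [sum_filter_ne_zero_eq_sub]
    have h1 : ∑ s : F, TeichPow T (-(i : ℤ)) (y - s) = ∑ x : F, TeichPow T (-(i : ℤ)) x :=
      Fintype.sum_equiv (Equiv.subLeft y) _ _ (fun x => rfl)
    rw [h1, hvan1, sub_zero, zero_sub]
  have hS2 : ∑ s ∈ Finset.univ.filter (fun s : F => s ≠ 0),
        TeichPow T (k : ℤ) s * TeichPow T (-(i : ℤ)) (y - s)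
      = J * TeichPow T (-((i : ℤ) + k)) y := by
    rw [sum_filter_ne_zero_eq_sub, tp_zero, zero_mul, sub_zero]
    by_cases hy : y = 0
    · subst hy
      have hterm : ∀ s : F, TeichPow T (k : ℤ) s * TeichPow T (-(i : ℤ)) (0 - s)
          = TeichPow T ((k : ℤ) - i) (-s) := by
        intro s
        rw [zero_sub]
        have hx : TeichPow T (k : ℤ) s = TeichPow T (k : ℤ) (-s) := by
          conv_lhs => rw [show s = (-1 : F) * (-s) by ring]
          rw [tp_mul, hneg1, one_mul]
        rw [hx, sub_eq_add_neg, tp_add]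
      rw [Finset.sum_congr rfl fun s _ => hterm s]
      have h1 : ∑ s : F, TeichPow T ((k : ℤ) - i) (-s)
          = ∑ x : F, TeichPow T ((k : ℤ) - i) x :=
        Fintype.sum_equiv (Equiv.neg F) _ _ (fun x => rfl)
      rw [h1, hvan2, tp_zero, mul_zero]
    · have hre : ∑ s : F, TeichPow T (k : ℤ) s * TeichPow T (-(i : ℤ)) (y - s)
          = ∑ x : F, TeichPow T (k : ℤ) (y * x) * TeichPow T (-(i : ℤ)) (y - y * x) :=
        (Fintype.sum_equiv (Equiv.mulLeft₀ y hy) _ _ (fun x => rfl)).symm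
      rw [hre]
      have hterm : ∀ x : F, TeichPow T (k : ℤ) (y * x) * TeichPow T (-(i : ℤ)) (y - y * x)
          = TeichPow T ((k : ℤ) - i) y
            * (TeichPow T (k : ℤ) x * TeichPow T (-(i : ℤ)) (1 - x)) := by
        intro x
        rw [show y - y * x = y * (1 - x) by ring, tp_mul, tp_mul,
          show (k : ℤ) - i = (k : ℤ) + (-(i : ℤ)) by ring, tp_add]
        ring
      rw [Finset.sum_congr rfl fun x _ => hterm x, ← Finset.mul_sum]
      have h1 : TeichPow T ((k : ℤ) - i) y = TeichPow T (-((i : ℤ) + k)) y := by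
        have hcast : (k : ℤ) - i = -((i : ℤ) + k) + ((Fintype.card F - 1 : ℕ) : ℤ) := by
          rw [hcard]; omega
        rw [hcast, tp_period]
      have h2 : ∑ x : F, TeichPow T (k : ℤ) x * TeichPow T (-(i : ℤ)) (1 - x) = J := by
        rw [hJ, JacobiSumT]
        refine Fintype.sum_equiv (Equiv.subLeft (1 : F)) _ _ (fun x => ?_)
        simp only [Equiv.subLeft_apply, sub_sub_cancel]
        ring
      rw [h1, h2, mul_comm]
  simp only [paleyLap, he]
  push_cast
  rw [hcard]
  rw [← hk]
  rw [nsmul_eq_mul]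
  set A := ∑ s ∈ Finset.univ.filter (fun s : F => s ≠ 0 ∧ IsSquare s),
      TeichPow T (-(i : ℤ)) (y - s) with hA
  have hsplit : Finset.univ.filter (fun s : F => s ≠ 0 ∧ IsSquare s)
      = (Finset.univ.filter (fun s : F => s ≠ 0)).filter (fun s => IsSquare s) := by
    rw [Finset.filter_filter]
  have hA2 : (2 : R) * A = -(TeichPow T (-(i : ℤ)) y) + J * TeichPow T (-((i : ℤ) + k)) y := by
    calc (2 : R) * A
        = ∑ s ∈ (Finset.univ.filter (fun s : F => s ≠ 0)).filter (fun s => IsSquare s),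
            (2 : R) * TeichPow T (-(i : ℤ)) (y - s) := by
          rw [hA, hsplit, Finset.mul_sum]
      _ = ∑ s ∈ Finset.univ.filter (fun s : F => s ≠ 0),
            if IsSquare s then (2 : R) * TeichPow T (-(i : ℤ)) (y - s) else 0 :=
          Finset.sum_filter _ _
      _ = ∑ s ∈ Finset.univ.filter (fun s : F => s ≠ 0),
            (TeichPow T (-(i : ℤ)) (y - s)
              + TeichPow T (k : ℤ) s * TeichPow T (-(i : ℤ)) (y - s)) := by
          refine Finset.sum_congr rfl fun s hs => ?_
          have hs0 : s ≠ 0 := (Finset.mem_filter.mp hs).2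
          by_cases h : IsSquare s
          · rw [if_pos h, hsq s hs0 h]; ring
          · rw [if_neg h, hnsq s hs0 h]; ring
      _ = -(TeichPow T (-(i : ℤ)) y) + J * TeichPow T (-((i : ℤ) + k)) y := by
          rw [Finset.sum_add_distrib, hS1, hS2]
  have hcastq : (q : R) = 2 * (k : R) + 1 := by
    have hq1 : q = 2 * k + 1 := by omega
    rw [hq1]; push_cast; ring
  have hinv : (2 : R) * ⅟(2 : R) = 1 := mul_invOf_self 2
  linear_combination (-⅟(2 : R)) * hA2 + (-⅟(2 : R) * TeichPow T (-(i : ℤ)) y) * hcastq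
    + (A - (k : R) * TeichPow T (-(i : ℤ)) y) * hinv
end

section
/- The number of integers i with 0 ≤ i ≤ q−2 such that adding i and (q−1)/2 in base p modulo q−1 involves no carries equals ((p+1)/2)^t; equivalently, the p-rank of the Laplacian of P(q) is ((p+1)/2)^t. -/
/-!
Over the field `F` of order `q = p ^ t`, Euler's criterion `χ(a) = a ^ k` with `k = (q - 1) / 2`
turns `-2 • L` into the matrix `(1 + (x - y) ^ k)_{x,y}`. Expanding `(x - y) ^ k` binomially
factors this matrix as `V * T * diagonal c * W`, where `V` and `Wᵀ` are Vandermonde-type matrices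
with injective `mulVec`, `T` is a transvection, and `c a = k.choose a`; so its rank is the number
of `a ≤ k` with `p ∤ k.choose a`. Every base-`p` digit of `k` is `(p - 1) / 2`, so by Lucas's
theorem these are exactly the `a < q` whose digits are all at most `(p - 1) / 2`, and there are
`((p + 1) / 2) ^ t` of them. The rank over `ZMod p` is the rank over `F`, since reduction to a
diagonal matrix by transvections commutes with field embeddings.
-/

open Finset Matrix

section Digits

variable {p m : ℕ}

theorem forall_mem_digits_le_iff (hp : 1 < p) (a : ℕ) :
    (∀ d ∈ Nat.digits p a, d ≤ m) ↔
      a % p ≤ m ∧ ∀ d ∈ Nat.digits p (a / p), d ≤ m := by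
  rcases Nat.eq_zero_or_pos a with rfl | ha
  · simp
  · rw [Nat.digits_def' hp ha, List.forall_mem_cons]

theorem card_filter_range_pow_forall_digits_le (hp : 1 < p) (hm : m < p) (t : ℕ) :
    #{i ∈ range (p ^ t) | ∀ d ∈ Nat.digits p i, d ≤ m} = (m + 1) ^ t := by
  induction t with
  | zero => simp [filter_singleton]
  | succ t ih =>
    have hp0 : 0 < p := by omega
    have hmod (r j : ℕ) (hr : r < p) : (r + p * j) % p = r := by
      rw [Nat.add_mul_mod_self_left, Nat.mod_eq_of_lt hr]
    have hdiv (r j : ℕ) (hr : r < p) : (r + p * j) / p = j := by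
      rw [Nat.add_mul_div_left _ _ hp0, Nat.div_eq_of_lt hr, zero_add]
    have hsplit : #{i ∈ range (p ^ (t + 1)) | ∀ d ∈ Nat.digits p i, d ≤ m} =
        #(range (m + 1) ×ˢ {i ∈ range (p ^ t) | ∀ d ∈ Nat.digits p i, d ≤ m}) := by
      refine card_nbij' (fun i => (i % p, i / p)) (fun x => x.1 + p * x.2) ?_ ?_ ?_ ?_
      · intro i hi
        simp only [coe_filter, mem_range, Set.mem_ofPred_eq, coe_product, coe_range,
          Set.mem_prod, Set.mem_Iio, forall_mem_digits_le_iff hp i] at hi ⊢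
        refine ⟨by omega, ?_, hi.2.2⟩
        rw [Nat.div_lt_iff_lt_mul hp0, ← pow_succ]
        exact hi.1
      · rintro ⟨r, j⟩ hx
        simp only [coe_filter, mem_range, Set.mem_ofPred_eq, coe_product, coe_range,
          Set.mem_prod, Set.mem_Iio] at hx ⊢
        rw [forall_mem_digits_le_iff hp, hmod r j (by omega), hdiv r j (by omega), pow_succ]
        refine ⟨by nlinarith, by omega, hx.2.2⟩
      · intro i _
        exact Nat.mod_add_div i p
      · rintro ⟨r, j⟩ hx
        simp only [coe_product, coe_range, Set.mem_prod, Set.mem_Iio] at hx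
        simp only [hmod r j (by omega), hdiv r j (by omega)]
    rw [hsplit, card_product, card_range, ih, pow_succ, mul_comm]

theorem pow_sub_one_mod_self (hp : 0 < p) {t : ℕ} (ht : t ≠ 0) : (p ^ t - 1) % p = p - 1 := by
  obtain ⟨s, rfl⟩ := Nat.exists_eq_succ_of_ne_zero ht
  have hN : 1 ≤ p ^ s := Nat.one_le_pow _ _ hp
  have hpN : p ≤ p * p ^ s := Nat.le_mul_of_pos_right p hN
  rw [pow_succ', show p * p ^ s - 1 = (p - 1) + p * (p ^ s - 1) by rw [Nat.mul_sub_one]; omega,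
    Nat.add_mul_mod_self_left, Nat.mod_eq_of_lt (by omega)]

theorem card_filter_range_pow_sub_one_forall_digits_le (hm : m + 1 < p) {t : ℕ} (ht : t ≠ 0) :
    #{i ∈ range (p ^ t - 1) | ∀ d ∈ Nat.digits p i, d ≤ m} = (m + 1) ^ t := by
  have hpos : 0 < p ^ t := pow_pos (by omega) t
  have hlast : ¬ ∀ d ∈ Nat.digits p (p ^ t - 1), d ≤ m := by
    rw [forall_mem_digits_le_iff (by omega), pow_sub_one_mod_self (by omega) ht]
    omega
  have hrange : range (p ^ t) = insert (p ^ t - 1) (range (p ^ t - 1)) := by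
    rw [← range_add_one, Nat.sub_add_cancel hpos]
  rw [← card_filter_range_pow_forall_digits_le (p := p) (m := m) (by omega) (by omega) t, hrange,
    filter_insert, if_neg hlast]

theorem Nat.Prime.not_dvd_choose_iff_le (hp : p.Prime) (hm : m < p) {b : ℕ} :
    ¬ p ∣ m.choose b ↔ b ≤ m := by
  refine ⟨fun h => not_lt.mp fun hb => h ?_, fun hb => ?_⟩
  · rw [Nat.choose_eq_zero_of_lt hb]
    exact dvd_zero p
  · exact (Nat.Prime.coprime_iff_not_dvd hp).mp (hp.coprime_choose_of_lt hm hb)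

theorem half_pred_pow_succ (hodd : Odd p) (t : ℕ) :
    (p ^ (t + 1) - 1) / 2 = (p - 1) / 2 + p * ((p ^ t - 1) / 2) := by
  obtain ⟨v, hv⟩ := hodd.pow (n := t)
  obtain ⟨u, rfl⟩ := hodd
  rw [pow_succ, hv]
  simp only [Nat.add_sub_cancel, Nat.mul_div_cancel_left _ two_pos]
  rw [show (2 * v + 1) * (2 * u + 1) = 2 * (u + (2 * u + 1) * v) + 1 by ring,
    Nat.add_sub_cancel, Nat.mul_div_cancel_left _ two_pos]

theorem not_dvd_choose_half_pred_pow_iff [hp : Fact p.Prime] (hodd : Odd p) {t a : ℕ}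
    (ha : a < p ^ t) :
    ¬ p ∣ ((p ^ t - 1) / 2).choose a ↔ ∀ d ∈ Nat.digits p a, d ≤ (p - 1) / 2 := by
  induction t generalizing a with
  | zero =>
    obtain rfl : a = 0 := by simpa using ha
    simp [hp.out.ne_one]
  | succ t ih =>
    have hp1 := hp.out.one_lt
    have hm : (p - 1) / 2 < p := by omega
    have hdigit : (p ^ (t + 1) - 1) / 2 % p = (p - 1) / 2 := by
      rw [half_pred_pow_succ hodd, Nat.add_mul_mod_self_left, Nat.mod_eq_of_lt hm]
    have hrest : (p ^ (t + 1) - 1) / 2 / p = (p ^ t - 1) / 2 := by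
      rw [half_pred_pow_succ hodd, Nat.add_mul_div_left _ _ (by omega), Nat.div_eq_of_lt hm,
        zero_add]
    have ha' : a / p < p ^ t := by
      rwa [Nat.div_lt_iff_lt_mul (by omega), ← pow_succ]
    rw [(Choose.choose_modEq_choose_mod_mul_choose_div_nat (p := p)).dvd_iff dvd_rfl, hdigit,
      hrest, hp.out.dvd_mul, not_or, hp.out.not_dvd_choose_iff_le hm, ih ha',
      forall_mem_digits_le_iff hp1 a]

theorem card_filter_range_not_dvd_choose_half_pred_pow [hp : Fact p.Prime] (hodd : Odd p)
    (t : ℕ) :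
    #{a ∈ range ((p ^ t - 1) / 2 + 1) | ¬ p ∣ ((p ^ t - 1) / 2).choose a} =
      ((p + 1) / 2) ^ t := by
  have hp1 := hp.out.one_lt
  have hpos : 0 < p ^ t := pow_pos (by omega) t
  have hrange : {a ∈ range ((p ^ t - 1) / 2 + 1) | ¬ p ∣ ((p ^ t - 1) / 2).choose a} =
      {a ∈ range (p ^ t) | ¬ p ∣ ((p ^ t - 1) / 2).choose a} := by
    ext a
    simp only [mem_filter, mem_range, and_congr_left_iff]
    intro ha
    refine ⟨fun h => by omega, fun h => not_le.mp fun hle => ha ?_⟩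
    rw [Nat.choose_eq_zero_of_lt (by omega)]
    exact dvd_zero p
  rw [hrange, filter_congr fun a ha => not_dvd_choose_half_pred_pow_iff hodd (mem_range.mp ha),
    card_filter_range_pow_forall_digits_le hp1 (by omega),
    show (p - 1) / 2 + 1 = (p + 1) / 2 by omega]

end Digits

section Rank

theorem Matrix.rank_mul_mul_of_isUnit_det {R n : Type*} [CommRing R] [Fintype n] [DecidableEq n]
    (P A Q : Matrix n n R) (hP : IsUnit P.det) (hQ : IsUnit Q.det) :
    (P * A * Q).rank = A.rank := by
  rw [rank_mul_eq_left_of_isUnit_det _ _ hQ, rank_mul_eq_right_of_isUnit_det _ _ hP]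

theorem Matrix.rank_mul_eq_right_of_mulVec_injective {R l m n : Type*} [CommRing R] [Fintype m]
    [Fintype n] (A : Matrix l m R) (B : Matrix m n R) (hA : Function.Injective A.mulVec) :
    (A * B).rank = B.rank := by
  rw [rank, rank, mulVecLin_mul, LinearMap.range_comp]
  exact (Submodule.equivMapOfInjective A.mulVecLin hA _).finrank_eq.symm

open Polynomial in
theorem Matrix.mulVec_injective_of_pow {R ι κ : Type*} [CommRing R] [IsDomain R] [Fintype ι]
    [Fintype κ] {v : ι → R}
    (hv : Function.Injective v) {e : κ → ℕ} (he : Function.Injective e)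
    (hlt : ∀ j, e j < Fintype.card ι) :
    Function.Injective (of fun i j => v i ^ e j).mulVec := by
  classical
  refine (injective_iff_map_eq_zero (of fun i j => v i ^ e j).mulVecLin).mpr fun c hc => ?_
  set P : R[X] := ∑ j, C (c j) * X ^ e j
  have hP : P = 0 := by
    refine eq_zero_of_degree_lt_of_eval_index_eq_zero (s := univ) hv.injOn ?_ ?_
    · refine (degree_sum_le _ _).trans_lt
        ((Finset.sup_lt_iff (WithBot.bot_lt_coe _)).mpr fun j _ => ?_)
      exact (degree_C_mul_X_pow_le _ _).trans_lt (by exact_mod_cast hlt j)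
    · intro i _
      have hci := congrFun hc i
      simp only [mulVecLin_apply, mulVec, dotProduct, of_apply, Pi.zero_apply] at hci
      simp only [P, eval_finsetSum, eval_mul, eval_C, eval_pow, eval_X, ← hci]
      exact Finset.sum_congr rfl fun j _ => mul_comm _ _
  funext j
  simpa [P, finsetSum_coeff, coeff_C_mul_X_pow, he.eq_iff] using congrArg (coeff · (e j)) hP

variable {K : Type*} [Field K]

theorem Matrix.rank_map_of_injective {L : Type*} [Field L] {n : Type*} [Fintype n]
    [DecidableEq n] (φ : K →+* L) (hφ : Function.Injective φ) (A : Matrix n n K) :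
    (A.map φ).rank = A.rank := by
  classical
  obtain ⟨P, Q, D, hPAQ⟩ := Pivot.exists_list_transvec_mul_mul_list_transvec_eq_diagonal A
  set P' := (P.map TransvectionStruct.toMatrix).prod
  set Q' := (Q.map TransvectionStruct.toMatrix).prod
  have hP' : P'.det = 1 := TransvectionStruct.det_toMatrix_prod P
  have hQ' : Q'.det = 1 := TransvectionStruct.det_toMatrix_prod Q
  have det_map {M : Matrix n n K} (hM : M.det = 1) : IsUnit (M.map φ).det := by
    rw [← RingHom.mapMatrix_apply, ← RingHom.map_det, hM, map_one]
    exact isUnit_one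
  calc (A.map φ).rank = (P'.map φ * A.map φ * Q'.map φ).rank :=
        (rank_mul_mul_of_isUnit_det _ _ _ (det_map hP') (det_map hQ')).symm
    _ = (diagonal (φ ∘ D)).rank := by
        rw [← Matrix.map_mul, ← Matrix.map_mul, hPAQ, diagonal_map (map_zero φ)]
        rfl
    _ = (diagonal D).rank := by
        rw [rank_diagonal, rank_diagonal]
        exact Fintype.card_congr (Equiv.subtypeEquivRight fun i => map_ne_zero_iff φ hφ)
    _ = A.rank := by
        rw [← hPAQ, rank_mul_mul_of_isUnit_det _ _ _ (by simp [hP']) (by simp [hQ'])]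

theorem rank_one_add_sub_pow [Fintype K] [DecidableEq K] {k : ℕ} (hk0 : 0 < k)
    (hk : k < Fintype.card K) :
    (of fun x y : K => 1 + (x - y) ^ k).rank = #{a ∈ range (k + 1) | (k.choose a : K) ≠ 0} := by
  let V : Matrix K (Fin (k + 1)) K := of fun x a => x ^ (a : ℕ)
  let W : Matrix (Fin (k + 1)) K K := of fun a y => (-y) ^ (k - a)
  let c : Fin (k + 1) → K := fun a => (k.choose a : K)
  let T : Matrix (Fin (k + 1)) (Fin (k + 1)) K := transvection 0 (Fin.last k) 1
  have hdecomp : (of fun x y : K => 1 + (x - y) ^ k) = V * (T * (diagonal c * W)) := by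
    ext x y
    rw [show T = 1 + single 0 (Fin.last k) 1 from rfl, Matrix.add_mul, Matrix.one_mul,
      Matrix.mul_add, Matrix.add_apply, of_apply, add_comm]
    congr 1
    · rw [sub_eq_add_neg, add_pow, ← Fin.sum_univ_eq_sum_range]
      simp only [mul_apply (M := V), diagonal_mul, V, W, c, of_apply]
      exact Finset.sum_congr rfl fun a _ => by ring
    -- row `Fin.last k` of `diagonal c * W` is constantly `1`; `T` adds it to row `0`
    · simp [V, W, c, mul_apply, Matrix.single_apply, ite_and, diagonal_apply]
  have hV : Function.Injective V.mulVec :=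
    mulVec_injective_of_pow Function.injective_id Fin.val_injective (fun a => by omega)
  have hW : Function.Injective Wᵀ.mulVec :=
    mulVec_injective_of_pow neg_injective (fun a b h => Fin.ext (by omega)) (fun a => by omega)
  have hT : IsUnit T.det := by
    rw [det_transvection_of_ne _ _ (by simp [Fin.ext_iff]; omega)]
    exact isUnit_one
  calc (of fun x y : K => 1 + (x - y) ^ k).rank
      = (diagonal c * W).rank := by
        rw [hdecomp, rank_mul_eq_right_of_mulVec_injective _ _ hV,
          rank_mul_eq_right_of_isUnit_det _ _ hT]
    _ = (Wᵀ * diagonal c).rank := by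
        rw [← rank_transpose, transpose_mul, diagonal_transpose]
    _ = Fintype.card {a // c a ≠ 0} := by
        rw [rank_mul_eq_right_of_mulVec_injective _ _ hW, rank_diagonal]
    _ = #{a ∈ range (k + 1) | (k.choose a : K) ≠ 0} := by
        rw [Fintype.card_subtype, ← Nat.Iio_eq_range, ← Fin.map_valEmbedding_univ, filter_map,
          card_map]
        rfl

end Rank

theorem FiniteField.one_add_pow_card_div_two {F : Type*} [Field F] [Fintype F]
    [DecidablePred (IsSquare : F → Prop)] (hF : ringChar F ≠ 2) {a : F} (ha : a ≠ 0) :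
    1 + a ^ (Fintype.card F / 2) = if IsSquare a then 2 else 0 := by
  split_ifs with hsq <;> rw [FiniteField.isSquare_iff hF ha] at hsq
  · rw [hsq, one_add_one_eq_two]
  · rw [(FiniteField.pow_dichotomy hF ha).resolve_left hsq, add_neg_cancel]

section Paley

variable (F : Type*) [Field F] [Fintype F] [DecidableEq F] [DecidablePred (IsSquare : F → Prop)]

def paleyLaplacian : Matrix F F ℤ :=
  of fun x y => (if x = y then (((Fintype.card F - 1) / 2 : ℕ) : ℤ) else 0) -
    (if x ≠ y ∧ IsSquare (x - y) then 1 else 0)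

variable {F}

theorem neg_two_smul_map_paleyLaplacian (hF : ringChar F ≠ 2) :
    (-2 : F) • (paleyLaplacian F).map (Int.cast : ℤ → F) =
      of fun x y => 1 + (x - y) ^ (Fintype.card F / 2) := by
  have hodd := FiniteField.odd_card_of_char_ne_two hF
  have htwo : 1 < Fintype.card F := Fintype.one_lt_card
  ext x y
  rcases eq_or_ne x y with rfl | hxy
  · have hcast := congrArg (Nat.cast : ℕ → F)
      (show 2 * ((Fintype.card F - 1) / 2) + 1 = Fintype.card F by omega)
    push_cast [FiniteField.cast_card_eq_zero] at hcast
    simp only [paleyLaplacian, Matrix.smul_apply, map_apply, of_apply, if_true, ne_eq,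
      not_true_eq_false, false_and, if_false, sub_zero, Int.cast_natCast, sub_self,
      zero_pow (show Fintype.card F / 2 ≠ 0 by omega), add_zero, smul_eq_mul]
    linear_combination -hcast
  · simp only [paleyLaplacian, Matrix.smul_apply, map_apply, of_apply, hxy, if_false, ne_eq,
      not_false_eq_true, true_and, zero_sub,
      FiniteField.one_add_pow_card_div_two hF (sub_ne_zero.mpr hxy)]
    split_ifs <;> norm_num

theorem rank_map_paleyLaplacian (hF : ringChar F ≠ 2) :
    ((paleyLaplacian F).map (Int.cast : ℤ → F)).rank =
      #{a ∈ range (Fintype.card F / 2 + 1) | ((Fintype.card F / 2).choose a : F) ≠ 0} := by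
  have hodd := FiniteField.odd_card_of_char_ne_two hF
  have htwo : 1 < Fintype.card F := Fintype.one_lt_card
  have hunit : (-2 : F) ∈ nonZeroDivisors F :=
    mem_nonZeroDivisors_of_ne_zero (neg_ne_zero.mpr (Ring.two_ne_zero hF))
  rw [← rank_smul_of_mem_nonZeroDivisors _ hunit, neg_two_smul_map_paleyLaplacian hF]
  exact rank_one_add_sub_pow (by omega) (by omega)

end Paley

theorem paley_laplacian_p_rank_general
    (p t q : ℕ) [hp : Fact p.Prime] (hodd : Odd p) (ht : 1 ≤ t) (hq : q = p ^ t)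
    (F : Type*) [Field F] [Fintype F] [DecidableEq F]
    [DecidablePred (IsSquare : F → Prop)]
    (hcard : Fintype.card F = q)
    (L : Matrix F F ℤ)
    (hL : ∀ x y : F, L x y =
      (if x = y then (((q - 1) / 2 : ℕ) : ℤ) else 0) -
        (if x ≠ y ∧ IsSquare (x - y) then 1 else 0)) :
    ((Finset.range (q - 1)).filter
        (fun i => ∀ d ∈ Nat.digits p i, d ≤ (p - 1) / 2)).card = ((p + 1) / 2) ^ t ∧
      (L.map (Int.cast : ℤ → ZMod p)).rank = ((p + 1) / 2) ^ t := by
  have hp2 := hp.out.two_le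
  have hp_odd := Nat.odd_iff.mp hodd
  have hm : (p - 1) / 2 + 1 = (p + 1) / 2 := by omega
  subst hq
  refine ⟨hm ▸ card_filter_range_pow_sub_one_forall_digits_le (by omega) (by omega), ?_⟩
  have : CharP F p := charP_of_card_eq_prime_pow hcard
  have hF : ringChar F ≠ 2 := by rw [ringChar.eq F p]; omega
  have hL' : L = paleyLaplacian F := Matrix.ext fun x y => by
    rw [hL, paleyLaplacian, of_apply, hcard]
  have hk : Fintype.card F / 2 = (p ^ t - 1) / 2 := by
    have := Nat.odd_iff.mp (hodd.pow (n := t))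
    omega
  have hmap : (L.map (Int.cast : ℤ → ZMod p)).map (ZMod.castHom dvd_rfl F) =
      L.map (Int.cast : ℤ → F) := by
    ext; simp
  rw [← rank_map_of_injective _ (ZMod.castHom_injective F), hmap, hL',
    rank_map_paleyLaplacian hF, hk]
  simp only [ne_eq, CharP.cast_eq_zero_iff F p]
  exact card_filter_range_not_dvd_choose_half_pred_pow hodd t

/-- The number of `i` with `0 ≤ i ≤ q−2` such that adding `i` and `(q−1)/2` in
base `p` modulo `q−1` involves no carries (equivalently, all base-`p` digits of
`i` are at most `(p−1)/2`) equals `((p+1)/2)^t`; equivalently, the `p`-rank of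
the Laplacian of `P(q)` is `((p+1)/2)^t`. -/
theorem paley_laplacian_p_rank
    (p t q : ℕ) [hp : Fact p.Prime] (hodd : Odd p) (ht : 1 ≤ t) (hq : q = p ^ t)
    (hq4 : q % 4 = 1)
    (F : Type*) [Field F] [Fintype F] [DecidableEq F]
    [DecidablePred (IsSquare : F → Prop)]
    (hcard : Fintype.card F = q)
    (L : Matrix F F ℤ)
    (hL : ∀ x y : F, L x y =
      (if x = y then (((q - 1) / 2 : ℕ) : ℤ) else 0) -
        (if x ≠ y ∧ IsSquare (x - y) then 1 else 0)) :
    ((Finset.range (q - 1)).filter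
        (fun i => ∀ d ∈ Nat.digits p i, d ≤ (p - 1) / 2)).card = ((p + 1) / 2) ^ t ∧
      (L.map (Int.cast : ℤ → ZMod p)).rank = ((p + 1) / 2) ^ t :=
  paley_laplacian_p_rank_general p t q (hp := hp) hodd ht hq F hcard L hL
end

section
/- For 1 ≤ i ≤ q−2, i ≠ k, the carry counts c(i) in the modular base-p addition of i and k=(q−1)/2 satisfy c(i) + c(q−1−i) = t, where q = p^t. -/
def gsum (p n : ℕ) : ℕ := (Nat.digits p n).sum

lemma gsum_eq {p : ℕ} (hp2 : 2 ≤ p) (n : ℕ) : gsum p n = n % p + gsum p (n / p) := by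
  rcases Nat.eq_zero_or_pos n with h | h
  · simp [gsum, h]
  · rw [gsum, Nat.digits_def' hp2 h]
    simp [gsum]

lemma gsum_one {p : ℕ} (hp2 : 2 ≤ p) : gsum p 1 = 1 := by
  rw [gsum_eq hp2, Nat.mod_eq_of_lt (by omega), Nat.div_eq_of_lt (by omega)]
  simp [gsum]

lemma gsum_add_le {p : ℕ} (hp2 : 2 ≤ p) : ∀ n a b, a + b = n →
    gsum p (a + b) ≤ gsum p a + gsum p b := by
  intro n
  induction n using Nat.strong_induction_on with
  | _ n IH =>
    intro a b hab
    rcases Nat.eq_zero_or_pos n with h0 | h0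
    · have ha : a = 0 := by omega
      have hb : b = 0 := by omega
      simp [ha, hb]
    have hda := Nat.div_add_mod a p
    have hdb := Nat.div_add_mod b p
    set x := a / p + b / p with hxdef
    set r := a % p + b % p with hrdef
    have hx : p * x = p * (a / p) + p * (b / p) := by rw [hxdef, Nat.mul_add]
    have habx : a + b = p * x + r := by omega
    have hra : a % p < p := Nat.mod_lt _ (by omega)
    have hrb : b % p < p := Nat.mod_lt _ (by omega)
    by_cases hr : r < p
    · have hm : (a + b) % p = r := by rw [habx, Nat.mul_add_mod, Nat.mod_eq_of_lt hr]
      have hd : (a + b) / p = x := by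
        rw [habx, Nat.mul_add_div (by omega), Nat.div_eq_of_lt hr, add_zero]
      have hxlt : x < n := by
        have h2 : 2 * x ≤ p * x := Nat.mul_le_mul_right x hp2
        omega
      have h1 : gsum p x ≤ gsum p (a / p) + gsum p (b / p) := IH x hxlt _ _ rfl
      rw [gsum_eq hp2 (a + b), hm, hd, gsum_eq hp2 a, gsum_eq hp2 b]
      omega
    · push_neg at hr
      have habx2 : a + b = p * (x + 1) + (r - p) := by
        have : p * (x + 1) = p * x + p := by ring
        omega
      have hm : (a + b) % p = r - p := by
        rw [habx2, Nat.mul_add_mod, Nat.mod_eq_of_lt (by omega)]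
      have hd : (a + b) / p = x + 1 := by
        rw [habx2, Nat.mul_add_div (by omega), Nat.div_eq_of_lt (by omega), add_zero]
      have hx1lt : x + 1 < n := by
        have h2 : 2 * (x + 1) ≤ p * (x + 1) := Nat.mul_le_mul_right _ hp2
        have : p * (x + 1) = p * x + p := by ring
        omega
      have h1 : gsum p (x + 1) ≤ gsum p x + gsum p 1 := IH (x + 1) hx1lt x 1 rfl
      have h2 : gsum p x ≤ gsum p (a / p) + gsum p (b / p) := IH x (by omega) _ _ rfl
      rw [gsum_eq hp2 (a + b), hm, hd, gsum_eq hp2 a, gsum_eq hp2 b]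
      rw [gsum_one hp2] at h1
      omega

lemma gsum_compl {p : ℕ} (hp2 : 2 ≤ p) : ∀ t a, a ≤ p ^ t - 1 →
    gsum p a + gsum p (p ^ t - 1 - a) = t * (p - 1) := by
  intro t
  induction t with
  | zero =>
    intro a ha
    simp only [pow_zero] at ha ⊢
    have : a = 0 := by omega
    simp [this, gsum]
  | succ t IH =>
    intro a ha
    have hP : 1 ≤ p ^ t := Nat.one_le_pow _ _ (by omega)
    have hPP : p ^ (t + 1) = p * p ^ t := by rw [pow_succ]; ring
    have hPP' : p ^ (t + 1) = p ^ t * p := pow_succ p t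
    have hP1 : 1 ≤ p ^ (t + 1) := Nat.one_le_pow _ _ (by omega)
    have hda := Nat.div_add_mod a p
    have hr : a % p < p := Nat.mod_lt _ (by omega)
    have hxP : a / p ≤ p ^ t - 1 := by
      have h1 : a / p < p ^ t := by
        apply Nat.div_lt_of_lt_mul
        omega
      omega
    obtain ⟨x, hxdef⟩ : ∃ x, a / p = x := ⟨_, rfl⟩
    obtain ⟨r, hrdef⟩ : ∃ r, a % p = r := ⟨_, rfl⟩
    rw [hxdef, hrdef] at hda
    rw [hrdef] at hr
    rw [hxdef] at hxP
    obtain ⟨y, hydef⟩ : ∃ y, p ^ t - 1 - x = y := ⟨_, rfl⟩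
    have hxy : x + 1 + y = p ^ t := by omega
    have hpy : p * p ^ t = p * x + p + p * y := by rw [← hxy]; ring
    have hcompl : p ^ (t + 1) - 1 - a = p * y + (p - 1 - r) := by omega
    have hm : (p ^ (t + 1) - 1 - a) % p = p - 1 - r := by
      rw [hcompl, Nat.mul_add_mod, Nat.mod_eq_of_lt (by omega)]
    have hd : (p ^ (t + 1) - 1 - a) / p = y := by
      rw [hcompl, Nat.mul_add_div (by omega), Nat.div_eq_of_lt (by omega), add_zero]
    have IHy : gsum p x + gsum p y = t * (p - 1) := by
      have := IH x hxP
      rwa [hydef] at this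
    rw [gsum_eq hp2 a, gsum_eq hp2 (p ^ (t + 1) - 1 - a), hm, hd, hxdef, hrdef]
    have : (t + 1) * (p - 1) = t * (p - 1) + (p - 1) := by ring
    omega

lemma gsum_add_pow {p : ℕ} (hp2 : 2 ≤ p) : ∀ t a, a < p ^ t →
    gsum p (a + p ^ t) = gsum p a + 1 := by
  intro t
  induction t with
  | zero =>
    intro a ha
    simp only [pow_zero] at ha ⊢
    have h0 : a = 0 := by omega
    simp only [h0, zero_add, gsum_one hp2]
    simp [gsum]
  | succ t IH =>
    intro a ha
    have hd : (a + p ^ (t + 1)) / p = a / p + p ^ t := by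
      rw [pow_succ, Nat.add_mul_div_right _ _ (by omega : 0 < p)]
    have hm : (a + p ^ (t + 1)) % p = a % p := by
      rw [pow_succ, Nat.add_mul_mod_self_right]
    have hlt : a / p < p ^ t := by
      apply Nat.div_lt_of_lt_mul
      rw [mul_comm, ← pow_succ]
      exact ha
    rw [gsum_eq hp2 (a + p ^ (t + 1)), hm, hd, IH _ hlt, gsum_eq hp2 a]
    omega


/-- For `1 ≤ i ≤ q−2`, `i ≠ k = (q−1)/2`, the carry counts
`c(i) = (s(i) + s(k) − s(i+k mod (q−1)))/(p−1)` in the modular base-`p` addition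
of `i` and `k` satisfy `c(i) + c(q−1−i) = t`, where `q = p^t` and `s` is the
base-`p` digit sum of the least nonnegative residue modulo `q−1`. -/
theorem carry_count_complement
    (p t q : ℕ) (hp : p.Prime) (hodd : Odd p) (ht : 1 ≤ t) (hq : q = p ^ t)
    (s : ℕ → ℕ) (hs : ∀ x : ℕ, s x = (Nat.digits p (x % (q - 1))).sum)
    (c : ℕ → ℕ) (hc : ∀ i : ℕ, c i = (s i + s ((q - 1) / 2) - s (i + (q - 1) / 2)) / (p - 1))
    (i : ℕ) (hi1 : 1 ≤ i) (hi2 : i ≤ q - 2) (hik : i ≠ (q - 1) / 2) :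
    c i + c (q - 1 - i) = t := by
  have hp2 : 2 ≤ p := hp.two_le
  have hp3 : 3 ≤ p := by
    rcases Nat.lt_or_ge p 3 with h | h
    · exfalso
      have hodd' := Nat.odd_iff.mp hodd
      omega
    · exact h
  have hple : p ≤ p ^ t := Nat.le_self_pow (by omega) p
  have hq3 : 3 ≤ q := by omega
  have hqodd : q % 2 = 1 := by
    rw [hq]; exact Nat.odd_iff.mp (hodd.pow)
  -- introduce opaque abbreviations
  obtain ⟨N, hNdef⟩ : ∃ N, q - 1 = N := ⟨_, rfl⟩
  obtain ⟨k, hkdef⟩ : ∃ k, (q - 1) / 2 = k := ⟨_, rfl⟩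
  rw [hNdef] at hs
  rw [hkdef] at hc hik
  rw [show q - 1 - i = N - i by omega]
  obtain ⟨j, hjdef⟩ : ∃ j, N - i = j := ⟨_, rfl⟩
  rw [hjdef]
  have hN : N = p ^ t - 1 := by omega
  have h2k : 2 * k = N := by omega
  have hN2 : 2 ≤ N := by omega
  have hkN : k < N := by omega
  have hk1 : 1 ≤ k := by omega
  have hiN : i ≤ N - 1 := by omega
  have hj1 : 1 ≤ j := by omega
  have hjN : j ≤ N - 1 := by omega
  obtain ⟨m1, hm1def⟩ : ∃ m, (i + k) % N = m := ⟨_, rfl⟩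
  obtain ⟨m2, hm2def⟩ : ∃ m, (j + k) % N = m := ⟨_, rfl⟩
  have hpow1 : 1 ≤ p ^ t := by omega
  -- helper: gsum m ≤ gsum (m + N) for 1 ≤ m ≤ N
  have hgrow : ∀ m, 1 ≤ m → m ≤ N → gsum p m ≤ gsum p (m + N) := by
    intro m hm1 hm2'
    have h1 : m + N = (m - 1) + p ^ t := by omega
    have h2 : m - 1 < p ^ t := by omega
    rw [h1, gsum_add_pow hp2 t (m - 1) h2]
    calc gsum p m = gsum p ((m - 1) + 1) := by rw [Nat.sub_add_cancel hm1]
      _ ≤ gsum p (m - 1) + gsum p 1 := gsum_add_le hp2 _ _ _ rfl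
      _ = gsum p (m - 1) + 1 := by rw [gsum_one hp2]
  -- compute m1, m2 in the two cases
  have hmain : i < k ∧ m1 = i + k ∧ m2 = k - i ∨ k < i ∧ m1 = i - k ∧ m2 = j + k := by
    rcases Nat.lt_or_ge i k with h | h
    · left
      have e1 : (i + k) % N = i + k := Nat.mod_eq_of_lt (by omega)
      have e2 : (j + k) % N = (j + k - N) % N := Nat.mod_eq_sub_mod (by omega)
      have e3 : (j + k - N) % N = j + k - N := Nat.mod_eq_of_lt (by omega)
      omega
    · have h' : k < i := by omega
      right
      have e1 : (i + k) % N = (i + k - N) % N := Nat.mod_eq_sub_mod (by omega)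
      have e2 : (i + k - N) % N = i + k - N := Nat.mod_eq_of_lt (by omega)
      have e3 : (j + k) % N = j + k := Nat.mod_eq_of_lt (by omega)
      omega
  have hm1N : 1 ≤ m1 ∧ m1 ≤ N - 1 := by rcases hmain with ⟨h0, h1, h2⟩ | ⟨h0, h1, h2⟩ <;> omega
  have hm12 : m1 + m2 = N := by rcases hmain with ⟨h0, h1, h2⟩ | ⟨h0, h1, h2⟩ <;> omega
  have gle1 : gsum p m1 ≤ gsum p i + gsum p k := by
    rcases hmain with ⟨h0, h1, _⟩ | ⟨h0, h1, _⟩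
    · rw [h1]; exact gsum_add_le hp2 _ _ _ rfl
    · calc gsum p m1 ≤ gsum p (m1 + N) := hgrow m1 (by omega) (by omega)
        _ = gsum p (i + k) := by rw [show m1 + N = i + k by omega]
        _ ≤ gsum p i + gsum p k := gsum_add_le hp2 _ _ _ rfl
  have gle2 : gsum p m2 ≤ gsum p j + gsum p k := by
    rcases hmain with ⟨h0, _, h2⟩ | ⟨h0, _, h2⟩
    · calc gsum p m2 ≤ gsum p (m2 + N) := hgrow m2 (by omega) (by omega)
        _ = gsum p (j + k) := by rw [show m2 + N = j + k by omega]
        _ ≤ gsum p j + gsum p k := gsum_add_le hp2 _ _ _ rfl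
    · rw [h2]; exact gsum_add_le hp2 _ _ _ rfl
  -- digit-sum complement facts
  have hsumij : gsum p i + gsum p j = t * (p - 1) := by
    have := gsum_compl hp2 t i (by omega)
    rwa [show p ^ t - 1 - i = j by omega] at this
  have hsumk : gsum p k + gsum p k = t * (p - 1) := by
    have := gsum_compl hp2 t k (by omega)
    rwa [show p ^ t - 1 - k = k by omega] at this
  have hsumm : gsum p m1 + gsum p m2 = t * (p - 1) := by
    have := gsum_compl hp2 t m1 (by omega)
    rwa [show p ^ t - 1 - m1 = m2 by omega] at this
  -- divisibility
  have hdvdN : (p - 1) ∣ N := by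
    have h := Nat.sub_dvd_pow_sub_pow p 1 t
    simp only [one_pow] at h
    rw [hN]
    exact h
  have hpmod : p % (p - 1) = 1 := by
    have h1 : (p - 1 + 1) % (p - 1) = 1 % (p - 1) := Nat.add_mod_left _ _
    rwa [show p - 1 + 1 = p by omega, Nat.mod_eq_of_lt (by omega : 1 < p - 1)] at h1
  have hmodeq : ∀ n : ℕ, n ≡ gsum p n [MOD p - 1] := fun n =>
    Nat.modEq_digits_sum (p - 1) p hpmod n
  have key : ∀ a b m : ℕ, (a + b) % N = m → gsum p m ≤ gsum p a + gsum p b →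
      (p - 1) ∣ gsum p a + gsum p b - gsum p m := by
    intro a b m hm hle
    have hmle : m ≤ a + b := hm ▸ Nat.mod_le _ _
    have hdvd1 : (p - 1) ∣ a + b - m := by
      have hdm := Nat.div_add_mod (a + b) N
      have heq : a + b - m = N * ((a + b) / N) := by omega
      rw [heq]
      exact hdvdN.mul_right _
    have h1 : m ≡ a + b [MOD p - 1] := (Nat.modEq_iff_dvd' hmle).mpr hdvd1
    have h2 : gsum p m ≡ gsum p a + gsum p b [MOD p - 1] :=
      (hmodeq m).symm.trans (h1.trans ((hmodeq a).add (hmodeq b)))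
    exact (Nat.modEq_iff_dvd' hle).mp h2
  obtain ⟨A, hA⟩ := key i k m1 hm1def gle1
  obtain ⟨B, hB⟩ := key j k m2 hm2def gle2
  have hABt : A + B = t := by
    have hmulAB : (p - 1) * (A + B) = (p - 1) * t := by
      have e1 : (p - 1) * (A + B) = (p - 1) * A + (p - 1) * B := by ring
      have e2 : (p - 1) * t = t * (p - 1) := by ring
      omega
    exact Nat.eq_of_mul_eq_mul_left (by omega) hmulAB
  -- rewrite c i and c j
  have hci : c i = A := by
    rw [hc i, hs i, hs k, hs (i + k), Nat.mod_eq_of_lt (show i < N by omega),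
      Nat.mod_eq_of_lt (show k < N by omega), hm1def]
    show (gsum p i + gsum p k - gsum p m1) / (p - 1) = A
    rw [hA, Nat.mul_div_cancel_left _ (show 0 < p - 1 by omega)]
  have hcj : c j = B := by
    rw [hc j, hs j, hs k, hs (j + k), Nat.mod_eq_of_lt (show j < N by omega),
      Nat.mod_eq_of_lt (show k < N by omega), hm2def]
    show (gsum p j + gsum p k - gsum p m2) / (p - 1) = B
    rw [hB, Nat.mul_div_cancel_left _ (show 0 < p - 1 by omega)]
  rw [hci, hcj]
  exact hABt
end

section
/- Let a, b ∈ {1,…,q−2} with q = p^t and a + (q−1)/2 ≡ b (mod q−1), with base-p digits a_i, b_i. Then there exists a unique carry sequence c_0,…,c_{t−1} ∈ {0,1}^t with c_t := c_0 such that a_i + (p−1)/2 + c_i = b_i + p·c_{i+1} for all 0 ≤ i ≤ t−1. -/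
/-!
Let `m = (q - 1) / 2`; its base-`p` digits all equal `(p - 1) / 2`. As `a, b < q - 1`, the
congruence says `a + m = b + ε (q - 1)` for some `ε ∈ {0, 1}`, i.e. `a + m + ε = b + ε q`.
Schoolbook addition of `a` and `m` with carry-in `ε` thus produces the digits of `b` and
carry-out `ε`, which closes the carries up cyclically. Two cyclic carry sequences differ by
some `d` with `d i = p * d (i + 1)` and `|d i| ≤ 1`, which forces `d = 0`.
-/

namespace AddWithCarry

/-- The carry into position `j` when adding `x` and `y` in base `p` with carry-in `e`. -/
def carry (p x y e j : ℕ) : ℕ := (x % p ^ j + y % p ^ j + e) / p ^ j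

variable {p x y e : ℕ}

@[simp]
lemma carry_zero : carry p x y e 0 = e := by
  simp [carry, Nat.mod_one]

lemma carry_lt_two (hp : 0 < p) (he : e ≤ 1) (j : ℕ) : carry p x y e j < 2 := by
  have hpj := pow_pos hp j
  have := Nat.mod_lt x hpj
  have := Nat.mod_lt y hpj
  exact Nat.div_lt_of_lt_mul (by omega)

lemma carry_of_lt_pow {t : ℕ} (hx : x < p ^ t) (hy : y < p ^ t) :
    carry p x y e t = (x + y + e) / p ^ t := by
  rw [carry, Nat.mod_eq_of_lt hx, Nat.mod_eq_of_lt hy]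

lemma mod_pow_add_mod_pow_add (j : ℕ) :
    x % p ^ j + y % p ^ j + e = (x + y + e) % p ^ j + p ^ j * carry p x y e j := by
  have h : (x % p ^ j + y % p ^ j + e) % p ^ j = (x + y + e) % p ^ j :=
    ((Nat.mod_modEq x _).add (Nat.mod_modEq y _)).add_right e
  rw [carry, ← h, Nat.mod_add_div]

lemma digit_add_digit_add_carry (hp : 0 < p) (j : ℕ) :
    x / p ^ j % p + y / p ^ j % p + carry p x y e j =
      (x + y + e) / p ^ j % p + p * carry p x y e (j + 1) := by
  have hj := mod_pow_add_mod_pow_add (x := x) (y := y) (e := e) (p := p) j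
  have hj1 := mod_pow_add_mod_pow_add (x := x) (y := y) (e := e) (p := p) (j + 1)
  rw [pow_succ, Nat.mod_mul, Nat.mod_mul, Nat.mod_mul] at hj1
  refine Nat.eq_of_mul_eq_mul_left (pow_pos hp j) ?_
  linarith

lemma half_pred_mul {u v : ℕ} (hu : Odd u) (hv : Odd v) :
    (u * v - 1) / 2 = u * ((v - 1) / 2) + (u - 1) / 2 := by
  obtain ⟨r, rfl⟩ := hu
  obtain ⟨s, rfl⟩ := hv
  have h : (2 * r + 1) * (2 * s + 1) - 1 = 2 * ((2 * r + 1) * s + r) := by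
    rw [Nat.sub_eq_of_eq_add]; ring
  rw [h, Nat.add_sub_cancel, Nat.add_sub_cancel, Nat.mul_div_cancel_left _ two_pos,
    Nat.mul_div_cancel_left _ two_pos, Nat.mul_div_cancel_left _ two_pos]

lemma div_pow_mod_half_pred_pow (hodd : Odd p) {j t : ℕ} (hj : j < t) :
    (p ^ t - 1) / 2 / p ^ j % p = (p - 1) / 2 := by
  obtain ⟨k, rfl⟩ : ∃ k, t = j + (k + 1) := ⟨t - j - 1, by omega⟩
  have hpj := pow_pos hodd.pos j
  rw [pow_add, half_pred_mul hodd.pow hodd.pow, Nat.mul_add_div hpj,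
    Nat.div_eq_of_lt (by omega : (p ^ j - 1) / 2 < p ^ j), add_zero, pow_succ',
    half_pred_mul hodd hodd.pow, Nat.mul_add_mod, Nat.mod_eq_of_lt (by have := hodd.pos; omega)]

lemma div_pow_mod_add_mul_pow (hp : 0 < p) {j t : ℕ} (hj : j < t) (n k : ℕ) :
    (n + k * p ^ t) / p ^ j % p = n / p ^ j % p := by
  obtain ⟨l, rfl⟩ : ∃ l, t = j + (l + 1) := ⟨t - j - 1, by omega⟩
  rw [show k * p ^ (j + (l + 1)) = k * p ^ l * p * p ^ j by ring,
    Nat.add_mul_div_right _ _ (pow_pos hp j), Nat.add_mul_mod_self_right]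

lemma exists_add_eq_add_mul_of_mod_eq {q : ℕ} (hx : x < 2 * (q - 1)) (hy : y < q - 1)
    (h : x % (q - 1) = y % (q - 1)) : ∃ ε ≤ 1, x + ε = y + ε * q := by
  have hdiv := Nat.mod_add_div x (q - 1)
  have hε : x / (q - 1) < 2 := Nat.div_lt_of_lt_mul (by omega)
  rw [h, Nat.mod_eq_of_lt hy] at hdiv
  refine ⟨x / (q - 1), by omega, ?_⟩
  interval_cases x / (q - 1) <;> omega

lemma apply_val_add_one {α : Type*} {t : ℕ} [NeZero t] {f : ℕ → α} (hf : f t = f 0)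
    (i : Fin t) : f ((i + 1 : Fin t) : ℕ) = f (i + 1) := by
  rw [Fin.val_add, Fin.val_one', Nat.add_mod_mod]
  rcases (show (i : ℕ) + 1 ≤ t from i.isLt).lt_or_eq with h | h
  · rw [Nat.mod_eq_of_lt h]
  · rw [h, Nat.mod_self, hf]

lemma cyclic_carries_unique {t : ℕ} [NeZero t] (hp : 2 ≤ p) {u v : Fin t → ℕ}
    {c c' : Fin t → Fin 2} (hc : ∀ i, u i + c i = v i + p * c (i + 1))
    (hc' : ∀ i, u i + c' i = v i + p * c' (i + 1)) : c = c' := by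
  funext j
  have h := hc (j - 1)
  have h' := hc' (j - 1)
  rw [sub_add_cancel] at h h'
  have := (c (j - 1)).isLt
  have := (c' (j - 1)).isLt
  apply Fin.ext
  have := (c j).isLt
  have := (c' j).isLt
  interval_cases (c j : ℕ) <;> interval_cases (c' j : ℕ) <;> omega

end AddWithCarry

open AddWithCarry

theorem modular_add_with_carry_general
    (p t q : ℕ) [NeZero t] (hp : p.Prime) (hodd : Odd p) (hq : q = p ^ t)
    (a b : ℕ) (ha2 : a ≤ q - 2) (hb2 : b ≤ q - 2)
    (hab : (a + (q - 1) / 2) % (q - 1) = b % (q - 1)) :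
    ∃! c : Fin t → Fin 2,
      ∀ i : Fin t,
        (a / p ^ (i : ℕ)) % p + (p - 1) / 2 + ((c i : ℕ)) =
          (b / p ^ (i : ℕ)) % p + p * ((c (i + 1) : ℕ)) := by
  subst hq
  have hq2 : 2 ≤ p ^ t := Nat.one_lt_pow (NeZero.ne t) hp.one_lt
  obtain ⟨ε, hε, hsum⟩ := exists_add_eq_add_mul_of_mod_eq (q := p ^ t) (by omega) (by omega) hab
  set m := (p ^ t - 1) / 2
  have hwrap : carry p a m ε t = carry p a m ε 0 := by
    rw [carry_of_lt_pow (by omega) (by omega), hsum, Nat.add_mul_div_right _ _ (by omega),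
      Nat.div_eq_of_lt (by omega), zero_add, carry_zero]
  let c : Fin t → Fin 2 := fun i => ⟨carry p a m ε i, carry_lt_two hp.pos hε i⟩
  have hc : ∀ i : Fin t, a / p ^ (i : ℕ) % p + (p - 1) / 2 + (c i : ℕ) =
      b / p ^ (i : ℕ) % p + p * (c (i + 1) : ℕ) := by
    intro i
    have h := digit_add_digit_add_carry (x := a) (y := m) (e := ε) hp.pos i
    rwa [div_pow_mod_half_pred_pow hodd i.isLt, hsum, div_pow_mod_add_mul_pow hp.pos i.isLt,
      ← apply_val_add_one hwrap] at h
  exact ⟨c, hc, fun c' hc' => cyclic_carries_unique hp.two_le hc' hc⟩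

/-- Modular `p`-ary add-with-carry: for `a, b ∈ {1, …, q−2}` with `q = p^t` and
`a + (q−1)/2 ≡ b (mod q−1)`, there is a unique carry sequence
`c : Fin t → {0,1}` (with the wraparound convention `c_t = c_0`) such that
`a_i + (p−1)/2 + c_i = b_i + p·c_{i+1}` for all `0 ≤ i ≤ t−1`, where `a_i, b_i`
are the base-`p` digits of `a` and `b`. -/
theorem modular_add_with_carry
    (p t q : ℕ) [NeZero t] (hp : p.Prime) (hodd : Odd p) (ht : 1 ≤ t) (hq : q = p ^ t)
    (a b : ℕ) (ha1 : 1 ≤ a) (ha2 : a ≤ q - 2) (hb1 : 1 ≤ b) (hb2 : b ≤ q - 2)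
    (hab : (a + (q - 1) / 2) % (q - 1) = b % (q - 1)) :
    ∃! c : Fin t → Fin 2,
      ∀ i : Fin t,
        (a / p ^ (i : ℕ)) % p + (p - 1) / 2 + ((c i : ℕ)) =
          (b / p ^ (i : ℕ)) % p + p * ((c (i + 1) : ℕ)) :=
  modular_add_with_carry_general p t q hp hodd hq a b ha2 hb2 hab
end

section
/- Let B be the (2p)×(2p) matrix over Z[x] indexed by [p]×{0,1} with entry at ((α,γ),(α′,γ′)) equal to x^{γ′} if there exists β ∈ [p] with α + (p−1)/2 + γ = β + pγ′, and 0 otherwise. Then det(I − zB) = 1 − ((p+1)/2)(1+x)z + pxz². -/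
open Polynomial

/-- The weighted adjacency matrix of the transfer digraph on `[p] × {0,1}`: the
entry at `((α,γ),(α′,γ′))` is `x^{γ′}` if there is `β ∈ [p]` with
`α + (p−1)/2 + γ = β + pγ′`, and `0` otherwise. -/
noncomputable def transferMatrix (p : ℕ) :
    Matrix (Fin p × Fin 2) (Fin p × Fin 2) (Polynomial ℤ) :=
  fun v w =>
    if ∃ β : Fin p, (v.1 : ℕ) + (p - 1) / 2 + (v.2 : ℕ) = (β : ℕ) + p * (w.2 : ℕ)
    then X ^ (w.2 : ℕ) else 0

/-!
The entry of `B` at `((α, γ), (β, γ′))` does not depend on `β`: it is `x^{γ′}` when `γ′` is the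
carry `(α + a + γ) / p` and `0` otherwise (here `a = (p - 1) / 2`). Hence `zB = A E` factors
through `2 × 2` matrices, and `det (1 - A E) = det (1 - E A)`. The entry of `E A` at
`(γ, γ′)` is `z x^{γ′}` times the number of digits `α` with carry `γ′`, namely `p - a - γ`
for `γ′ = 0` and `a + γ` for `γ′ = 1`. Expanding the `2 × 2` determinant gives
`1 - (p - a) z - (a + 1) x z + p x z²`, and `p - a = a + 1 = (p + 1) / 2` for odd `p`.
-/

open Finset

namespace Matrix

variable {ι κ R : Type*} [Fintype ι] [Fintype κ] [DecidableEq ι] [DecidableEq κ] [CommRing R]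

theorem det_one_sub_of_apply_snd (N : Matrix (ι × κ) κ R) :
    det (1 - of fun v w => N v w.2) = det (1 - of fun j l => ∑ i, N (i, j) l) := by
  have hfactor :
      (of fun v w => N v w.2) = N * of fun j (w : ι × κ) => (1 : Matrix κ κ R) j w.2 := by
    ext v w
    simp [mul_apply, one_apply]
  have hcollapse : (of fun j (w : ι × κ) => (1 : Matrix κ κ R) j w.2) * N =
      of fun j l => ∑ i, N (i, j) l := by
    ext j l : 1
    simp [mul_apply, Fintype.sum_prod_type, one_apply]
  rw [hfactor, det_one_sub_mul_comm, hcollapse]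

end Matrix

theorem Nat.exists_fin_eq_add_mul_iff {p : ℕ} (hp : 0 < p) (s c : ℕ) :
    (∃ β : Fin p, s = β + p * c) ↔ c = s / p := by
  constructor
  · rintro ⟨β, rfl⟩
    rw [Nat.add_mul_div_left _ _ hp, Nat.div_eq_of_lt β.isLt, zero_add]
  · rintro rfl
    exact ⟨⟨s % p, Nat.mod_lt s hp⟩, (Nat.mod_add_div s p).symm⟩

theorem Finset.sum_range_add_div {M : Type*} [AddCommMonoid M] {p b : ℕ} (hb : b ≤ p)
    (f : ℕ → M) : ∑ α ∈ range p, f ((α + b) / p) = (p - b) • f 0 + b • f 1 := by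
  rw [← sum_range_add_sum_Ico _ (Nat.sub_le p b)]
  have hlow : ∀ α ∈ range (p - b), f ((α + b) / p) = f 0 := fun α hα => by
    rw [mem_range] at hα
    rw [Nat.div_eq_of_lt (by omega)]
  have hhigh : ∀ α ∈ Ico (p - b) p, f ((α + b) / p) = f 1 := fun α hα => by
    rw [mem_Ico] at hα
    rw [Nat.div_eq_of_lt_le (k := 1) (by omega) (by omega)]
  rw [sum_congr rfl hlow, sum_congr rfl hhigh, sum_const, sum_const, card_range, Nat.card_Ico,
    Nat.sub_sub_self hb]

noncomputable def addDigitTransferMatrix (p a : ℕ) :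
    Matrix (Fin p × Fin 2) (Fin p × Fin 2) ℤ[X] :=
  fun v w =>
    if ∃ β : Fin p, (v.1 : ℕ) + a + (v.2 : ℕ) = (β : ℕ) + p * (w.2 : ℕ)
    then X ^ (w.2 : ℕ) else 0

theorem transferMatrix_eq_addDigitTransferMatrix (p : ℕ) :
    transferMatrix p = addDigitTransferMatrix p ((p - 1) / 2) := rfl

theorem addDigitTransferMatrix_det {p a : ℕ} (ha : a < p) :
    Matrix.det (1 - (X : ℤ[X][X]) • (addDigitTransferMatrix p a).map C) =
      1 - C (((p - a : ℕ) : ℤ[X]) + ((a + 1 : ℕ) : ℤ[X]) * X) * X +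
        C ((p : ℤ[X]) * X) * X ^ 2 := by
  set N : Matrix (Fin p × Fin 2) (Fin 2) ℤ[X][X] := .of fun v c =>
    if (c : ℕ) = ((v.1 : ℕ) + (a + v.2)) / p then X * C (X ^ (c : ℕ)) else 0
  have hentry : (X : ℤ[X][X]) • (addDigitTransferMatrix p a).map C = .of fun v w => N v w.2 := by
    ext v w : 1
    simp only [Matrix.smul_apply, Matrix.map_apply, Matrix.of_apply, addDigitTransferMatrix, N,
      Nat.exists_fin_eq_add_mul_iff (p := p) (by omega), add_assoc]
    split_ifs <;> simp
  have hcount (j l : Fin 2) :=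
    (Fin.sum_univ_eq_sum_range (fun α => if (l : ℕ) = (α + (a + j)) / p then
      (X : ℤ[X][X]) * C (X ^ (l : ℕ)) else 0) p).trans
    (sum_range_add_div (show a + j ≤ p by omega) fun c => if (l : ℕ) = c then
      (X : ℤ[X][X]) * C (X ^ (l : ℕ)) else 0)
  have hcollapsed : 1 - (Matrix.of fun j l => ∑ α, N (α, j) l) =
      !![1 - ((p - a : ℕ) : ℤ[X][X]) * X, -((a : ℤ[X][X]) * (C X * X));
        -(((p - (a + 1) : ℕ) : ℤ[X][X]) * X), 1 - ((a + 1 : ℕ) : ℤ[X][X]) * (C X * X)] := by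
    ext j l : 1
    simp only [N, Matrix.sub_apply, Matrix.of_apply, hcount]
    fin_cases j <;> fin_cases l <;> simp [X_mul_C]
  rw [hentry, Matrix.det_one_sub_of_apply_snd, hcollapsed, Matrix.det_fin_two_of]
  push_cast [Nat.cast_sub ha.le, Nat.cast_sub ha, map_add, map_sub, map_mul, map_natCast,
    map_one]
  ring

theorem transfer_matrix_char_det_general
    (p : ℕ) (hodd : Odd p) :
    Matrix.det
        (1 - (X : Polynomial (Polynomial ℤ)) • (transferMatrix p).map C) =
      1 - C ((((p + 1) / 2 : ℕ) : Polynomial ℤ) * (1 + X)) * X +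
        C ((p : Polynomial ℤ) * X) * X ^ 2 := by
  obtain ⟨k, hk⟩ := hodd
  have hshift : (p - 1) / 2 < p := by omega
  have hcarry : p - (p - 1) / 2 = (p + 1) / 2 := by omega
  have hnocarry : (p - 1) / 2 + 1 = (p + 1) / 2 := by omega
  rw [transferMatrix_eq_addDigitTransferMatrix, addDigitTransferMatrix_det hshift, hcarry, hnocarry,
    ← mul_one_add]

/-- `det(I − zB) = 1 − ((p+1)/2)(1+x)z + pxz²` for the transfer matrix `B`. -/
theorem transfer_matrix_char_det
    (p : ℕ) (hp : p.Prime) (hodd : Odd p) :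
    Matrix.det
        (1 - (X : Polynomial (Polynomial ℤ)) • (transferMatrix p).map C) =
      1 - C ((((p + 1) / 2 : ℕ) : Polynomial ℤ) * (1 + X)) * X +
        C ((p : Polynomial ℤ) * X) * X ^ 2 :=
  transfer_matrix_char_det_general p hodd
end
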